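/- For all positive integers n and m and all a, b ∈ ℕ^n with a ⊵ b, the set of plane partitions of skew shape θ(a,b) with entries at most m is in bijection with the set of integer flows in the flow polytope F_{G(n,m)}(a,b); in particular these two finite sets have the same cardinality. -/
import Mathlib



open scoped BigOperators Classical

namespace GPS

/-! ### Vectors in `ℕ^n`, dominance order, support vectors -/

/-- Partial sum `a 1 + ⋯ + a i` of the first `i` entries of `a ∈ ℕ^n`
(entries indexed by `Fin n`). -/
def psum {n : ℕ} (a : Fin n → ℕ) (i : ℕ) : ℕ :=
  ∑ k : Fin n, if (k : ℕ) < i then a k else 0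

/-- `a` dominates `b`: all partial sums of `a` are at least those of `b`. -/
def Dominates {n : ℕ} (a b : Fin n → ℕ) : Prop :=
  ∀ i : ℕ, psum b i ≤ psum a i

/-- The 0/1 vector `χ(u)` with the same support as `u`. -/
def chi {n : ℕ} (u : Fin n → ℕ) : Fin n → ℕ := fun i => if u i = 0 then 0 else 1

/-- `z(u,w) ≤ z`: `u ⊵ w`, `χ(u) ⊵ χ(w)`, and the zeros of `u` can be matched
injectively to zeros of `w`, each zero position `i` of `u` matched to a zero
position `j` of `w` with `j ≤ i ≤ j + z`.  (This is equivalent to the greedy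
matching `M` of the zeros having `i - j ≤ z` for all `(i,j) ∈ M`.)
In particular `DomZle 1 u w` is the relation `u ⊵₁ w`. -/
def DomZle {n : ℕ} (z : ℕ) (u w : Fin n → ℕ) : Prop :=
  Dominates u w ∧ Dominates (chi u) (chi w) ∧
  ∃ φ : Fin n → Fin n, Set.InjOn φ { i | u i = 0 } ∧
    ∀ i, u i = 0 → w (φ i) = 0 ∧ (φ i : ℕ) ≤ (i : ℕ) ∧ (i : ℕ) ≤ (φ i : ℕ) + z

/-! ### The grid graph `G(n,m)` and its flow polytope -/

/-- Vertices of the graph `G(n,m)`: the grid vertices `(i,j)` for `1 ≤ i ≤ n`,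
`0 ≤ j ≤ m` (encoded as `some (i,j)` with `i : Fin n`, `j : Fin (m+1)`)
together with the sink `s` (encoded as `none`). -/
abbrev Vtx (n m : ℕ) := Option (Fin n × Fin (m + 1))

/-- Edges of `G(n,m)`: horizontal edges `(i,j) → (i,j+1)`, vertical edges
`(i,j) → (i+1,j)`, and the edges `(n,j) → s`. -/
def IsEdge (n m : ℕ) : Vtx n m → Vtx n m → Prop
  | some (i, j), some (i', j') =>
      (i = i' ∧ (j' : ℕ) = (j : ℕ) + 1) ∨ ((i' : ℕ) = (i : ℕ) + 1 ∧ j = j')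
  | some (i, _), none => (i : ℕ) = n - 1
  | none, _ => False

/-- The netflow vector for `F_{G(n,m)}(a,b)`: vertex `(i,0)` has netflow `a i`,
vertex `(i,m)` has netflow `-b i`, interior vertices have netflow `0`, and
the sink has netflow `-∑ (a i - b i)`. -/
noncomputable def netflow (n m : ℕ) (a b : Fin n → ℕ) : Vtx n m → ℝ
  | some (i, j) =>
      (if (j : ℕ) = 0 then (a i : ℝ) else 0) - (if (j : ℕ) = m then (b i : ℝ) else 0)
  | none => -∑ i : Fin n, ((a i : ℝ) - (b i : ℝ))

/-- The flow polytope `F_{G(n,m)}(a,b)`: nonnegative functions on the edges of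
`G(n,m)` (encoded as functions on pairs of vertices vanishing off the edges)
with outflow minus inflow equal to the netflow at every vertex. -/
def FlowPolytope (n m : ℕ) (a b : Fin n → ℕ) : Set (Vtx n m → Vtx n m → ℝ) :=
  { f | (∀ u v, ¬ IsEdge n m u v → f u v = 0) ∧
        (∀ u v, 0 ≤ f u v) ∧
        (∀ u, (∑ v, f u v) - (∑ v, f v u) = netflow n m a b u) }

/-- An integer flow: a flow taking integer values on all edges. -/
def IsIntegerFlow {n m : ℕ} (f : Vtx n m → Vtx n m → ℝ) : Prop :=
  ∀ u v, ∃ z : ℤ, f u v = z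

/-- `x` is an extreme point (vertex) of `P`: `x ∈ P` and `x` is not the midpoint
of two distinct points of `P`. -/
def IsExtremePt {E : Type*} [AddCommGroup E] [Module ℝ E] (P : Set E) (x : E) : Prop :=
  x ∈ P ∧ ∀ y ∈ P, ∀ z ∈ P, x = (2 : ℝ)⁻¹ • (y + z) → y = z

/-- An unsplittable flow: each vertex has at most one outgoing edge with positive
flow, and no vertex with negative netflow has positive flow on an outgoing edge. -/
def IsUnsplittable (n m : ℕ) (a b : Fin n → ℕ) (f : Vtx n m → Vtx n m → ℝ) : Prop :=
  (∀ u v w, 0 < f u v → 0 < f u w → v = w) ∧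
  (∀ u, netflow n m a b u < 0 → ∀ v, f u v = 0)

/-- The number of vertices (extreme points) of `F_{G(n,m)}(a,b)`,
denoted `v^{(n,m)}(a,b)`. -/
noncomputable def numVertices (n m : ℕ) (a b : Fin n → ℕ) : ℕ :=
  Set.ncard { f | IsExtremePt (FlowPolytope n m a b) f }

/-- The number of unsplittable integer flows in `F_{G(n,m)}(a,b)`,
denoted `v_unsplit^{(n,m)}(a,b)`. -/
noncomputable def vUnsplit (n m : ℕ) (a b : Fin n → ℕ) : ℕ :=
  Set.ncard { f | f ∈ FlowPolytope n m a b ∧ IsIntegerFlow f ∧ IsUnsplittable n m a b f }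

end GPS
/-! ### Skew shapes and plane partitions -/

namespace GPS

/-- The partition `λ(a) = (a_1+⋯+a_n, …, a_1+a_2, a_1)`, with rows indexed
`1,…,n` (so `lamOf n a i = a_1 + ⋯ + a_{n+1-i}`). -/
def lamOf (n : ℕ) (a : Fin n → ℕ) : ℕ → ℕ := fun i => psum a (n + 1 - i)

/-- `(i,j)` is a cell of the skew shape `λ/μ` (with `n` rows, rows and columns
indexed from 1): `1 ≤ i ≤ n` and `μ_i < j ≤ λ_i`. -/
def IsCellOf (n : ℕ) (lam mu : ℕ → ℕ) (i j : ℕ) : Prop :=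
  1 ≤ i ∧ i ≤ n ∧ mu i < j ∧ j ≤ lam i

/-- A plane partition of skew shape `λ/μ` with entries in `{0,1,…,m}`:
an array vanishing outside the shape, with entries at most `m`, weakly
decreasing along rows and columns. -/
def IsSkewPP (n m : ℕ) (lam mu : ℕ → ℕ) (π : ℕ → ℕ → ℕ) : Prop :=
  (∀ i j, ¬ IsCellOf n lam mu i j → π i j = 0) ∧
  (∀ i j, IsCellOf n lam mu i j → π i j ≤ m) ∧
  (∀ i j, IsCellOf n lam mu i j → IsCellOf n lam mu i (j + 1) → π i (j + 1) ≤ π i j) ∧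
  (∀ i j, IsCellOf n lam mu i j → IsCellOf n lam mu (i + 1) j → π (i + 1) j ≤ π i j)

/-- The conjugate partition: `conjOf n λ j = #{1 ≤ i ≤ n : λ_i ≥ j}`. -/
def conjOf (n : ℕ) (lam : ℕ → ℕ) (j : ℕ) : ℕ :=
  ((Finset.Icc 1 n).filter fun i => j ≤ lam i).card

/-- A vertex plane partition of shape `λ/μ` with entries at most `m`
(Definition 4.5 of the paper). -/
def IsVertexPP (n m : ℕ) (lam mu : ℕ → ℕ) (π : ℕ → ℕ → ℕ) : Prop :=
  IsSkewPP n m lam mu π ∧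
  ∀ j : ℕ, 1 ≤ j →
    conjOf n mu j < conjOf n lam j → conjOf n mu (j + 1) < conjOf n lam (j + 1) →
    -- (i) `μ'_j = μ'_{j+1}` and `λ'_j = λ'_{j+1}`
    ((conjOf n mu j = conjOf n mu (j + 1) ∧ conjOf n lam j = conjOf n lam (j + 1) →
        ∀ i, π i j = π i (j + 1)) ∧
     -- (ii) `μ'_j = μ'_{j+1}` and `λ'_j > λ'_{j+1}`
     (conjOf n mu j = conjOf n mu (j + 1) ∧ conjOf n lam (j + 1) < conjOf n lam j →
        (∀ i, conjOf n mu (j + 1) + 2 ≤ i → i ≤ conjOf n lam (j + 1) →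
          π i j = π i (j + 1) → π (i - 1) j = π (i - 1) (j + 1)) ∧
        (∀ i, conjOf n mu (j + 1) + 1 ≤ i → i ≤ conjOf n lam (j + 1) →
          π i (j + 1) < π (i + 1) j ∨ π i (j + 1) = π i j)) ∧
     -- (iii) `λ'_j = λ'_{j+1}` and `μ'_j > μ'_{j+1}`
     (conjOf n lam j = conjOf n lam (j + 1) ∧ conjOf n mu (j + 1) < conjOf n mu j →
        (∀ i, conjOf n mu j + 1 ≤ i → i ≤ conjOf n lam j - 1 →
          π i j = π i (j + 1) → π (i + 1) j = π (i + 1) (j + 1)) ∧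
        (∀ i, conjOf n mu j ≤ i → i ≤ conjOf n lam j - 1 →
          π i (j + 1) < π (i + 1) j ∨ π (i + 1) j = π (i + 1) (j + 1))) ∧
     -- (iv) `μ'_j ≠ μ'_{j+1}` and `λ'_j ≠ λ'_{j+1}`
     (conjOf n mu j ≠ conjOf n mu (j + 1) ∧ conjOf n lam j ≠ conjOf n lam (j + 1) →
        ∀ imin imax : ℕ,
          ((IsCellOf n lam mu imin j ∧ IsCellOf n lam mu (imin - 1) (j + 1) ∧
              π imin j ≤ π (imin - 1) (j + 1)) ∧
            (∀ i, (IsCellOf n lam mu i j ∧ IsCellOf n lam mu (i - 1) (j + 1) ∧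
              π i j ≤ π (i - 1) (j + 1)) → imin ≤ i)) →
          ((IsCellOf n lam mu (imax + 1) j ∧ IsCellOf n lam mu imax (j + 1) ∧
              π (imax + 1) j ≤ π imax (j + 1)) ∧
            (∀ i, (IsCellOf n lam mu (i + 1) j ∧ IsCellOf n lam mu i (j + 1) ∧
              π (i + 1) j ≤ π i (j + 1)) → i ≤ imax)) →
          imin < imax → ∀ i, imin ≤ i → i ≤ imax → π i j = π i (j + 1)))

end GPS
/-! ### The graph `H_⊤(n)`, the matrix `A_n`, and general flow polytopes -/

namespace GPS

/-- Vertices of `H_⊤(n)`: `(i,-1), (i,0), (i,1)` for `1 ≤ i ≤ n` (encoded as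
`some (i,j)` with `j : Fin 3` standing for levels `-1, 0, 1`) and a sink `s`
(encoded as `none`). -/
abbrev HVtx (n : ℕ) := Option (Fin n × Fin 3)

/-- Edges of `H_⊤(n)`: `(i,-1) → (i,0)`, `(i,0) → (i,1)`, `(i,0) → (i+1,0)`,
and `(n,0) → s`. -/
def HIsEdge (n : ℕ) : HVtx n → HVtx n → Prop
  | some (i, j), some (i', j') =>
      (i = i' ∧ (j' : ℕ) = (j : ℕ) + 1) ∨
      ((j : ℕ) = 1 ∧ (j' : ℕ) = 1 ∧ (i' : ℕ) = (i : ℕ) + 1)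
  | some (i, j), none => (j : ℕ) = 1 ∧ (i : ℕ) = n - 1
  | none, _ => False

/-- The netflows for `F_{H_⊤(n)}(a,b)`: `(i,-1)` has netflow `a i`, `(i,1)` has
netflow `-b i`, `(i,0)` has netflow `0`, and the sink has `-∑ (a i - b i)`. -/
noncomputable def Hnetflow (n : ℕ) (a b : Fin n → ℕ) : HVtx n → ℝ
  | some (i, j) =>
      (if (j : ℕ) = 0 then (a i : ℝ) else 0) - (if (j : ℕ) = 2 then (b i : ℝ) else 0)
  | none => -∑ i : Fin n, ((a i : ℝ) - (b i : ℝ))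

/-- The flow polytope `F_{H_⊤(n)}(a,b)`. -/
def FHtop (n : ℕ) (a b : Fin n → ℕ) : Set (HVtx n → HVtx n → ℝ) :=
  { f | (∀ u v, ¬ HIsEdge n u v → f u v = 0) ∧
        (∀ u v, 0 ≤ f u v) ∧
        (∀ u, (∑ v, f u v) - (∑ v, f v u) = Hnetflow n a b u) }

/-- An unsplittable flow on `H_⊤(n)`. -/
def HUnsplittable (n : ℕ) (a b : Fin n → ℕ) (f : HVtx n → HVtx n → ℝ) : Prop :=
  (∀ u v w, 0 < f u v → 0 < f u w → v = w) ∧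
  (∀ u, Hnetflow n a b u < 0 → ∀ v, f u v = 0)

/-- The `2^n × 2^n` matrix `A_n`, with rows and columns indexed by `{0,1}^n`,
whose `(j,k)` entry is `1` if `j ⊵₁ k` and `0` otherwise. -/
noncomputable def An (n : ℕ) : Matrix (Fin n → Fin 2) (Fin n → Fin 2) ℤ :=
  Matrix.of fun j k =>
    if DomZle 1 (fun i => (j i : ℕ)) (fun i => (k i : ℕ)) then 1 else 0

/-- The support vector `χ(u)` as an element of `{0,1}^n` (encoded `Fin n → Fin 2`). -/
def chi2 {n : ℕ} (u : Fin n → ℕ) : Fin n → Fin 2 := fun i => if u i = 0 then 0 else 1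

/-- The flow polytope `F_G(c)` of a directed graph on vertex set `Fin (N+1)`
with edge relation `E` and netflow vector `c`. -/
def FlowPolyGen (N : ℕ) (E : Fin (N + 1) → Fin (N + 1) → Prop)
    (c : Fin (N + 1) → ℤ) : Set (Fin (N + 1) → Fin (N + 1) → ℝ) :=
  { f | (∀ u v, ¬ E u v → f u v = 0) ∧
        (∀ u v, 0 ≤ f u v) ∧
        (∀ u, (∑ v, f u v) - (∑ v, f v u) = (c u : ℝ)) }

end GPS
namespace GPS

/-! ### Auxiliary development for Statement 1 -/

section Aux

variable {n m : ℕ}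

/-! #### Basic facts about `psum` -/

theorem psum_zero (a : Fin n → ℕ) : psum a 0 = 0 := by
  simp [psum]

theorem psum_succ (a : Fin n → ℕ) (k : ℕ) (hk : k < n) :
    psum a (k + 1) = psum a k + a ⟨k, hk⟩ := by
  unfold psum
  have key : ∀ x : Fin n, (if (x : ℕ) < k + 1 then a x else 0) =
      (if (x : ℕ) < k then a x else 0) + (if x = ⟨k, hk⟩ then a x else 0) := by
    intro x
    rcases lt_trichotomy (x : ℕ) k with h | h | h
    · have hx : x ≠ ⟨k, hk⟩ := fun hx => by
        have := congrArg Fin.val hx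
        simp at this
        omega
      simp [h, Nat.lt_succ_of_lt h, hx]
    · have hx : x = ⟨k, hk⟩ := Fin.ext h
      simp [hx, h]
    · have hx : x ≠ ⟨k, hk⟩ := fun hx => by
        have := congrArg Fin.val hx
        simp at this
        omega
      have h1 : ¬ (x : ℕ) < k := by omega
      have h2 : ¬ (x : ℕ) < k + 1 := by omega
      simp [hx, h1, h2]
  rw [Finset.sum_congr rfl fun x _ => key x, Finset.sum_add_distrib]
  congr 1
  simp [Finset.sum_ite_eq']

theorem psum_stable (a : Fin n → ℕ) (k : ℕ) (hk : n ≤ k) :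
    psum a k = psum a n := by
  unfold psum
  refine Finset.sum_congr rfl fun x _ => ?_
  have hx : (x : ℕ) < n := x.isLt
  simp [hx, lt_of_lt_of_le hx hk]

theorem psum_mono (a : Fin n → ℕ) {k k' : ℕ} (h : k ≤ k') : psum a k ≤ psum a k' := by
  refine Finset.sum_le_sum fun x _ => ?_
  by_cases hx : (x : ℕ) < k
  · simp [hx, lt_of_lt_of_le hx h]
  · simp [hx]

theorem psum_n (a : Fin n → ℕ) : psum a n = ∑ i, a i := by
  refine Finset.sum_congr rfl fun x _ => ?_
  simp [x.isLt]

/-! #### Chains of vectors in dominance order -/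

/-- The intermediate object: a chain `a = c 0 ⊵ c 1 ⊵ ⋯ ⊵ c (m+1) = b`. -/
def IsChain (m : ℕ) (a b : Fin n → ℕ) (c : ℕ → Fin n → ℕ) : Prop :=
  c 0 = a ∧ (∀ t, m + 1 ≤ t → c t = b) ∧ ∀ t, Dominates (c t) (c (t + 1))

theorem IsChain.dom {a b : Fin n → ℕ} {c : ℕ → Fin n → ℕ} (hc : IsChain m a b c)
    {t t' : ℕ} (h : t ≤ t') : Dominates (c t) (c t') := by
  induction t', h using Nat.le_induction with
  | base => exact fun i => le_rfl
  | succ t' ht' ih => exact fun i => le_trans (hc.2.2 t' i) (ih i)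

theorem lamOf_antitone (a : Fin n → ℕ) {i i' : ℕ} (h : i ≤ i') :
    lamOf n a i' ≤ lamOf n a i :=
  psum_mono a (by omega)

theorem lamOf_le_of_dom {u w : Fin n → ℕ} (h : Dominates u w) (i : ℕ) :
    lamOf n w i ≤ lamOf n u i := h _

theorem lamOf_top (a : Fin n → ℕ) : lamOf n a (n + 1) = 0 := by
  simp [lamOf, psum_zero]

/-! #### From chains to flows -/

/-- The flow associated to a chain: horizontal edge `(i,j) → (i,j+1)` carries
`c (j+1) i`, and vertical/sink edges carry the appropriate partial-sum
differences. -/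
noncomputable def toFlow (n m : ℕ) (c : ℕ → Fin n → ℕ) : Vtx n m → Vtx n m → ℝ
  | some (i, j), some (i', j') =>
      if i = i' ∧ (j' : ℕ) = (j : ℕ) + 1 then (c ((j : ℕ) + 1) i : ℝ)
      else if (i' : ℕ) = (i : ℕ) + 1 ∧ j = j' then
        (psum (c (j : ℕ)) ((i : ℕ) + 1) : ℝ) - (psum (c ((j : ℕ) + 1)) ((i : ℕ) + 1) : ℝ)
      else 0
  | some (i, j), none =>
      if (i : ℕ) = n - 1 then
        (psum (c (j : ℕ)) ((i : ℕ) + 1) : ℝ) - (psum (c ((j : ℕ) + 1)) ((i : ℕ) + 1) : ℝ)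
      else 0
  | none, _ => 0

/-! #### Local sums for flows on `G(n,m)` -/

/-- Flow on the horizontal edge out of `(i,j)`. -/
noncomputable def fR (f : Vtx n m → Vtx n m → ℝ) (i : Fin n) (j : Fin (m + 1)) : ℝ :=
  if h : (j : ℕ) < m then f (some (i, j)) (some (i, ⟨(j : ℕ) + 1, by omega⟩)) else 0

/-- Flow on the vertical (or sink) edge out of `(i,j)`. -/
noncomputable def fD (f : Vtx n m → Vtx n m → ℝ) (i : Fin n) (j : Fin (m + 1)) : ℝ :=
  if h : (i : ℕ) + 1 < n then f (some (i, j)) (some (⟨(i : ℕ) + 1, h⟩, j))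
  else f (some (i, j)) none

/-- Flow on the horizontal edge into `(i,j)`. -/
noncomputable def fL (f : Vtx n m → Vtx n m → ℝ) (i : Fin n) (j : Fin (m + 1)) : ℝ :=
  if h : 0 < (j : ℕ) then f (some (i, ⟨(j : ℕ) - 1, by omega⟩)) (some (i, j)) else 0

/-- Flow on the vertical edge into `(i,j)`. -/
noncomputable def fU (f : Vtx n m → Vtx n m → ℝ) (i : Fin n) (j : Fin (m + 1)) : ℝ :=
  if h : 0 < (i : ℕ) then f (some (⟨(i : ℕ) - 1, by omega⟩, j)) (some (i, j)) else 0

theorem sum_eq_support {V : Type*} [Fintype V] (g : V → ℝ) (s : Finset V)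
    (h : ∀ v, g v ≠ 0 → v ∈ s) : ∑ v, g v = ∑ v ∈ s, g v := by
  refine (Finset.sum_subset (Finset.subset_univ s) ?_).symm
  intro x _ hx
  by_contra h'
  exact hx (h x h')

theorem outSum (f : Vtx n m → Vtx n m → ℝ)
    (hsupp : ∀ u v, ¬ IsEdge n m u v → f u v = 0) (i : Fin n) (j : Fin (m + 1)) :
    ∑ v, f (some (i, j)) v = fR f i j + fD f i j := by
  classical
  have hedge : ∀ v, f (some (i, j)) v ≠ 0 → IsEdge n m (some (i, j)) v := by
    intro v hv
    by_contra h
    exact hv (hsupp _ _ h)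
  by_cases hj : (j : ℕ) < m
  · set t1 : Vtx n m := some (i, ⟨(j : ℕ) + 1, by omega⟩) with ht1
    by_cases hi : (i : ℕ) + 1 < n
    · set t2 : Vtx n m := some (⟨(i : ℕ) + 1, hi⟩, j) with ht2
      have hne : t1 ≠ t2 := by
        simp only [ht1, ht2, Ne, Option.some.injEq, Prod.mk.injEq, Fin.ext_iff]
        omega
      rw [sum_eq_support _ {t1, t2} ?_, Finset.sum_pair hne]
      · rw [fR, fD, dif_pos hj, dif_pos hi]
      · intro v hv
        have he := hedge v hv
        simp only [Finset.mem_insert, Finset.mem_singleton, ht1, ht2]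
        rcases v with _ | ⟨i', j'⟩
        · have he' : (i : ℕ) = n - 1 := he
          omega
        · have he' : (i = i' ∧ (j' : ℕ) = (j : ℕ) + 1) ∨
              ((i' : ℕ) = (i : ℕ) + 1 ∧ j = j') := he
          simp only [Option.some.injEq, Prod.mk.injEq, Fin.ext_iff]
          rcases he' with ⟨h1, h2⟩ | ⟨h1, h2⟩
          · exact Or.inl ⟨by rw [h1], h2⟩
          · exact Or.inr ⟨h1, by rw [h2]⟩
    · rw [sum_eq_support _ {t1, none} ?_, Finset.sum_pair (by simp [ht1])]
      · rw [fR, fD, dif_pos hj, dif_neg hi]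
      · intro v hv
        have he := hedge v hv
        simp only [Finset.mem_insert, Finset.mem_singleton, ht1]
        rcases v with _ | ⟨i', j'⟩
        · exact Or.inr rfl
        · have he' : (i = i' ∧ (j' : ℕ) = (j : ℕ) + 1) ∨
              ((i' : ℕ) = (i : ℕ) + 1 ∧ j = j') := he
          simp only [Option.some.injEq, Prod.mk.injEq, Fin.ext_iff]
          rcases he' with ⟨h1, h2⟩ | ⟨h1, h2⟩
          · exact Or.inl ⟨by rw [h1], h2⟩
          · exact absurd i'.isLt (by omega)
  · by_cases hi : (i : ℕ) + 1 < n
    · set t2 : Vtx n m := some (⟨(i : ℕ) + 1, hi⟩, j) with ht2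
      rw [sum_eq_support _ {t2} ?_, Finset.sum_singleton]
      · rw [fR, fD, dif_neg hj, dif_pos hi, zero_add]
      · intro v hv
        have he := hedge v hv
        simp only [Finset.mem_singleton, ht2]
        rcases v with _ | ⟨i', j'⟩
        · have he' : (i : ℕ) = n - 1 := he
          omega
        · have he' : (i = i' ∧ (j' : ℕ) = (j : ℕ) + 1) ∨
              ((i' : ℕ) = (i : ℕ) + 1 ∧ j = j') := he
          simp only [Option.some.injEq, Prod.mk.injEq, Fin.ext_iff]
          rcases he' with ⟨h1, h2⟩ | ⟨h1, h2⟩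
          · exact absurd j'.isLt (by omega)
          · exact ⟨h1, by rw [h2]⟩
    · rw [sum_eq_support _ {none} ?_, Finset.sum_singleton]
      · rw [fR, fD, dif_neg hj, dif_neg hi, zero_add]
      · intro v hv
        have he := hedge v hv
        simp only [Finset.mem_singleton]
        rcases v with _ | ⟨i', j'⟩
        · rfl
        · have he' : (i = i' ∧ (j' : ℕ) = (j : ℕ) + 1) ∨
              ((i' : ℕ) = (i : ℕ) + 1 ∧ j = j') := he
          rcases he' with ⟨h1, h2⟩ | ⟨h1, h2⟩
          · exact absurd j'.isLt (by omega)
          · exact absurd i'.isLt (by omega)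

theorem inSum (f : Vtx n m → Vtx n m → ℝ)
    (hsupp : ∀ u v, ¬ IsEdge n m u v → f u v = 0) (i : Fin n) (j : Fin (m + 1)) :
    ∑ v, f v (some (i, j)) = fL f i j + fU f i j := by
  classical
  have hedge : ∀ v, f v (some (i, j)) ≠ 0 → IsEdge n m v (some (i, j)) := by
    intro v hv
    by_contra h
    exact hv (hsupp _ _ h)
  by_cases hj : 0 < (j : ℕ)
  · set t1 : Vtx n m := some (i, ⟨(j : ℕ) - 1, by omega⟩) with ht1
    by_cases hi : 0 < (i : ℕ)
    · set t2 : Vtx n m := some (⟨(i : ℕ) - 1, by omega⟩, j) with ht2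
      have hne : t1 ≠ t2 := by
        simp only [ht1, ht2, Ne, Option.some.injEq, Prod.mk.injEq, Fin.ext_iff]
        omega
      rw [sum_eq_support _ {t1, t2} ?_, Finset.sum_pair hne]
      · rw [fL, fU, dif_pos hj, dif_pos hi]
      · intro v hv
        have he := hedge v hv
        simp only [Finset.mem_insert, Finset.mem_singleton, ht1, ht2]
        rcases v with _ | ⟨i', j'⟩
        · exact he.elim
        · have he' : (i' = i ∧ (j : ℕ) = (j' : ℕ) + 1) ∨
              ((i : ℕ) = (i' : ℕ) + 1 ∧ j' = j) := he
          simp only [Option.some.injEq, Prod.mk.injEq, Fin.ext_iff]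
          rcases he' with ⟨h1, h2⟩ | ⟨h1, h2⟩
          · exact Or.inl ⟨by rw [h1], by omega⟩
          · exact Or.inr ⟨by omega, by rw [h2]⟩
    · rw [sum_eq_support _ {t1} ?_, Finset.sum_singleton]
      · rw [fL, fU, dif_pos hj, dif_neg hi, add_zero]
      · intro v hv
        have he := hedge v hv
        simp only [Finset.mem_singleton, ht1]
        rcases v with _ | ⟨i', j'⟩
        · exact he.elim
        · have he' : (i' = i ∧ (j : ℕ) = (j' : ℕ) + 1) ∨
              ((i : ℕ) = (i' : ℕ) + 1 ∧ j' = j) := he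
          simp only [Option.some.injEq, Prod.mk.injEq, Fin.ext_iff]
          rcases he' with ⟨h1, h2⟩ | ⟨h1, h2⟩
          · exact ⟨by rw [h1], by omega⟩
          · omega
  · by_cases hi : 0 < (i : ℕ)
    · set t2 : Vtx n m := some (⟨(i : ℕ) - 1, by omega⟩, j) with ht2
      rw [sum_eq_support _ {t2} ?_, Finset.sum_singleton]
      · rw [fL, fU, dif_neg hj, dif_pos hi, zero_add]
      · intro v hv
        have he := hedge v hv
        simp only [Finset.mem_singleton, ht2]
        rcases v with _ | ⟨i', j'⟩
        · exact he.elim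
        · have he' : (i' = i ∧ (j : ℕ) = (j' : ℕ) + 1) ∨
              ((i : ℕ) = (i' : ℕ) + 1 ∧ j' = j) := he
          simp only [Option.some.injEq, Prod.mk.injEq, Fin.ext_iff]
          rcases he' with ⟨h1, h2⟩ | ⟨h1, h2⟩
          · omega
          · exact ⟨by omega, by rw [h2]⟩
    · rw [sum_eq_support _ ∅ ?_, Finset.sum_empty]
      · rw [fL, fU, dif_neg hj, dif_neg hi, add_zero]
      · intro v hv
        have he := hedge v hv
        rcases v with _ | ⟨i', j'⟩
        · exact he.elim
        · have he' : (i' = i ∧ (j : ℕ) = (j' : ℕ) + 1) ∨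
              ((i : ℕ) = (i' : ℕ) + 1 ∧ j' = j) := he
          rcases he' with ⟨h1, h2⟩ | ⟨h1, h2⟩
          · omega
          · omega

theorem sinkInSum (hn : 0 < n) (f : Vtx n m → Vtx n m → ℝ)
    (hsupp : ∀ u v, ¬ IsEdge n m u v → f u v = 0) :
    ∑ v, f v none = ∑ j : Fin (m + 1), f (some (⟨n - 1, by omega⟩, j)) none := by
  classical
  rw [sum_eq_support (fun v => f v none)
      (Finset.univ.image fun j : Fin (m + 1) => (some (⟨n - 1, by omega⟩, j) : Vtx n m)) ?_,
    Finset.sum_image ?_]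
  · intro j1 _ j2 _ h
    simpa using h
  · intro v hv
    have he : IsEdge n m v none := by
      by_contra h
      exact hv (hsupp _ _ h)
    rcases v with _ | ⟨i', j'⟩
    · exact he.elim
    · have he' : (i' : ℕ) = n - 1 := he
      simp only [Finset.mem_image, Finset.mem_univ, true_and]
      exact ⟨j', by rw [show (⟨n - 1, by omega⟩ : Fin n) = i' from Fin.ext he'.symm]⟩

/-- Local flow balance at a grid vertex, for any member of the flow polytope. -/
theorem local_balance {a b : Fin n → ℕ} {f : Vtx n m → Vtx n m → ℝ}
    (hf : f ∈ FlowPolytope n m a b) (i : Fin n) (j : Fin (m + 1)) :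
    fR f i j + fD f i j - (fL f i j + fU f i j) = netflow n m a b (some (i, j)) := by
  obtain ⟨hsupp, _, hcons⟩ := hf
  rw [← outSum f hsupp i j, ← inSum f hsupp i j]
  exact hcons _

/-! #### `toFlow` is an integer flow -/

theorem toFlow_support (c : ℕ → Fin n → ℕ) :
    ∀ u v, ¬ IsEdge n m u v → toFlow n m c u v = 0 := by
  intro u v h
  rcases u with _ | ⟨i, j⟩
  · rfl
  rcases v with _ | ⟨i', j'⟩
  · have h' : ¬ ((i : ℕ) = n - 1) := h
    show (if (i : ℕ) = n - 1 then _ else 0) = 0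
    rw [if_neg h']
  · have h' : ¬ ((i = i' ∧ (j' : ℕ) = (j : ℕ) + 1) ∨ ((i' : ℕ) = (i : ℕ) + 1 ∧ j = j')) := h
    show (if i = i' ∧ (j' : ℕ) = (j : ℕ) + 1 then _
      else if (i' : ℕ) = (i : ℕ) + 1 ∧ j = j' then _ else 0) = 0
    rw [if_neg (fun hx => h' (Or.inl hx)), if_neg (fun hx => h' (Or.inr hx))]

theorem toFlow_fR (c : ℕ → Fin n → ℕ) (i : Fin n) (j : Fin (m + 1)) :
    fR (toFlow n m c) i j = if (j : ℕ) < m then (c ((j : ℕ) + 1) i : ℝ) else 0 := by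
  rw [fR]
  split_ifs with hj
  · show (if i = i ∧ ((⟨(j : ℕ) + 1, by omega⟩ : Fin (m + 1)) : ℕ) = (j : ℕ) + 1 then
        (c ((j : ℕ) + 1) i : ℝ) else _) = _
    rw [if_pos ⟨rfl, rfl⟩]
  · rfl

theorem toFlow_fD (c : ℕ → Fin n → ℕ) (i : Fin n) (j : Fin (m + 1)) :
    fD (toFlow n m c) i j =
      (psum (c (j : ℕ)) ((i : ℕ) + 1) : ℝ) - (psum (c ((j : ℕ) + 1)) ((i : ℕ) + 1) : ℝ) := by
  rw [fD]
  split_ifs with hi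
  · show (if i = ⟨(i : ℕ) + 1, hi⟩ ∧ (j : ℕ) = (j : ℕ) + 1 then _
      else if ((⟨(i : ℕ) + 1, hi⟩ : Fin n) : ℕ) = (i : ℕ) + 1 ∧ j = j then _ else 0) = _
    rw [if_neg (by omega), if_pos ⟨rfl, rfl⟩]
  · show (if (i : ℕ) = n - 1 then _ else 0) = _
    rw [if_pos (by have := i.isLt; omega)]

theorem toFlow_fL (c : ℕ → Fin n → ℕ) (i : Fin n) (j : Fin (m + 1)) :
    fL (toFlow n m c) i j = if 0 < (j : ℕ) then (c (j : ℕ) i : ℝ) else 0 := by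
  rw [fL]
  split_ifs with hj
  · show (if i = i ∧ (j : ℕ) = ((⟨(j : ℕ) - 1, by omega⟩ : Fin (m + 1)) : ℕ) + 1 then
        (c (((⟨(j : ℕ) - 1, by omega⟩ : Fin (m + 1)) : ℕ)  + 1) i : ℝ) else _) = _
    rw [if_pos ⟨rfl, by simp; omega⟩]
    congr 2
    simp
    omega
  · rfl

theorem toFlow_fU (c : ℕ → Fin n → ℕ) (i : Fin n) (j : Fin (m + 1)) :
    fU (toFlow n m c) i j =
      if 0 < (i : ℕ) then
        (psum (c (j : ℕ)) (i : ℕ) : ℝ) - (psum (c ((j : ℕ) + 1)) (i : ℕ) : ℝ)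
      else 0 := by
  rw [fU]
  split_ifs with hi
  · show (if (⟨(i : ℕ) - 1, by omega⟩ : Fin n) = i ∧ (j : ℕ) = (j : ℕ) + 1 then _
      else if (i : ℕ) = ((⟨(i : ℕ) - 1, by omega⟩ : Fin n) : ℕ) + 1 ∧ j = j then
        (psum (c (j : ℕ)) (((⟨(i : ℕ) - 1, by omega⟩ : Fin n) : ℕ) + 1) : ℝ) -
          (psum (c ((j : ℕ) + 1)) (((⟨(i : ℕ) - 1, by omega⟩ : Fin n) : ℕ) + 1) : ℝ)
      else 0) = _
    rw [if_neg (by omega), if_pos ⟨by simp; omega, rfl⟩]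
    have harith : ((⟨(i : ℕ) - 1, by omega⟩ : Fin n) : ℕ) + 1 = (i : ℕ) := by simp; omega
    rw [harith]
  · rfl

theorem toFlow_mem (hn : 0 < n) (hm : 0 < m) {a b : Fin n → ℕ} {c : ℕ → Fin n → ℕ}
    (hc : IsChain m a b c) : toFlow n m c ∈ FlowPolytope n m a b := by
  refine ⟨toFlow_support c, ?_, ?_⟩
  · -- nonnegativity
    intro u v
    rcases u with _ | ⟨i, j⟩
    · exact le_refl 0
    rcases v with _ | ⟨i', j'⟩
    · show (0 : ℝ) ≤ if (i : ℕ) = n - 1 then _ else 0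
      have hd := hc.2.2 (j : ℕ) ((i : ℕ) + 1)
      split_ifs
      · have : (psum (c ((j : ℕ) + 1)) ((i : ℕ) + 1) : ℝ) ≤
            (psum (c (j : ℕ)) ((i : ℕ) + 1) : ℝ) := by exact_mod_cast hd
        linarith
      · exact le_refl 0
    · show (0 : ℝ) ≤ if i = i' ∧ (j' : ℕ) = (j : ℕ) + 1 then _
        else if (i' : ℕ) = (i : ℕ) + 1 ∧ j = j' then _ else 0
      have hd := hc.2.2 (j : ℕ) ((i : ℕ) + 1)
      split_ifs
      · positivity
      · have : (psum (c ((j : ℕ) + 1)) ((i : ℕ) + 1) : ℝ) ≤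
            (psum (c (j : ℕ)) ((i : ℕ) + 1) : ℝ) := by exact_mod_cast hd
        linarith
      · exact le_refl 0
  · -- conservation
    intro u
    rcases u with _ | ⟨i, j⟩
    · -- sink
      have h1 : ∑ v, toFlow n m c none v = 0 :=
        Finset.sum_eq_zero fun v _ => rfl
      rw [h1, sinkInSum hn _ (toFlow_support c)]
      have h2 : ∀ j : Fin (m + 1),
          toFlow n m c (some (⟨n - 1, by omega⟩, j)) none =
            (psum (c (j : ℕ)) n : ℝ) - (psum (c ((j : ℕ) + 1)) n : ℝ) := by
        intro j
        show (if ((⟨n - 1, by omega⟩ : Fin n) : ℕ) = n - 1 then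
            (psum (c (j : ℕ)) (((⟨n - 1, by omega⟩ : Fin n) : ℕ) + 1) : ℝ) -
              (psum (c ((j : ℕ) + 1)) (((⟨n - 1, by omega⟩ : Fin n) : ℕ) + 1) : ℝ)
          else 0) = _
        rw [if_pos rfl]
        have : ((⟨n - 1, by omega⟩ : Fin n) : ℕ) + 1 = n := by simp; omega
        rw [this]
      rw [Finset.sum_congr rfl fun j _ => h2 j]
      have h3 : ∑ j : Fin (m + 1),
          ((psum (c (j : ℕ)) n : ℝ) - (psum (c ((j : ℕ) + 1)) n : ℝ)) =
          ∑ t ∈ Finset.range (m + 1),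
            ((psum (c t) n : ℝ) - (psum (c (t + 1)) n : ℝ)) :=
        Fin.sum_univ_eq_sum_range (fun t => (psum (c t) n : ℝ) - (psum (c (t + 1)) n : ℝ)) (m + 1)
      rw [h3, Finset.sum_range_sub' (fun t => (psum (c t) n : ℝ)) (m + 1)]
      rw [hc.1, hc.2.1 (m + 1) le_rfl]
      show 0 - ((psum a n : ℝ) - (psum b n : ℝ)) = -∑ x : Fin n, ((a x : ℝ) - (b x : ℝ))
      rw [Finset.sum_sub_distrib]
      have ha : (psum a n : ℝ) = ∑ x : Fin n, (a x : ℝ) := by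
        rw [psum_n]; push_cast; rfl
      have hb : (psum b n : ℝ) = ∑ x : Fin n, (b x : ℝ) := by
        rw [psum_n]; push_cast; rfl
      rw [ha, hb]
      ring
    · -- grid vertex
      rw [outSum _ (toFlow_support c) i j, inSum _ (toFlow_support c) i j,
        toFlow_fR, toFlow_fD, toFlow_fL, toFlow_fU]
      show _ = (if (j : ℕ) = 0 then (a i : ℝ) else 0) - (if (j : ℕ) = m then (b i : ℝ) else 0)
      have hs1 : (psum (c (j : ℕ)) ((i : ℕ) + 1) : ℝ) =
          (psum (c (j : ℕ)) (i : ℕ) : ℝ) + (c (j : ℕ) i : ℝ) := by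
        rw [psum_succ (c (j : ℕ)) (i : ℕ) i.isLt]
        push_cast
        rw [Fin.eta]
      have hs2 : (psum (c ((j : ℕ) + 1)) ((i : ℕ) + 1) : ℝ) =
          (psum (c ((j : ℕ) + 1)) (i : ℕ) : ℝ) + (c ((j : ℕ) + 1) i : ℝ) := by
        rw [psum_succ (c ((j : ℕ) + 1)) (i : ℕ) i.isLt]
        push_cast
        rw [Fin.eta]
      have hU : (if 0 < (i : ℕ) then
          (psum (c (j : ℕ)) (i : ℕ) : ℝ) - (psum (c ((j : ℕ) + 1)) (i : ℕ) : ℝ) else 0) =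
          (psum (c (j : ℕ)) (i : ℕ) : ℝ) - (psum (c ((j : ℕ) + 1)) (i : ℕ) : ℝ) := by
        split_ifs with h
        · rfl
        · have h0 : (i : ℕ) = 0 := by omega
          rw [h0]
          simp [psum_zero]
      rw [hU, hs1, hs2]
      rcases Nat.lt_trichotomy 0 (j : ℕ) with hj0 | hj0 | hj0
      · rcases Nat.lt_or_ge (j : ℕ) m with hjm | hjm
        · rw [if_pos hjm, if_pos hj0, if_neg (by omega), if_neg (by omega)]
          ring
        · have hjm' : (j : ℕ) = m := by have := j.isLt; omega
          rw [if_neg (by omega), if_pos hj0, if_neg (by omega), if_pos hjm']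
          have hb : c ((j : ℕ) + 1) = b := hc.2.1 _ (by omega)
          rw [hb]
          ring
      · have hj : (j : ℕ) = 0 := hj0.symm
        rw [if_pos (by omega), if_neg (by omega), if_pos hj, if_neg (by omega)]
        have ha : c (j : ℕ) = a := by rw [hj]; exact hc.1
        rw [ha, hj]
        ring
      · omega

theorem toFlow_int (c : ℕ → Fin n → ℕ) : IsIntegerFlow (toFlow n m c) := by
  intro u v
  rcases u with _ | ⟨i, j⟩
  · exact ⟨0, by push_cast; rfl⟩
  rcases v with _ | ⟨i', j'⟩
  · show ∃ z : ℤ, (if (i : ℕ) = n - 1 then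
      (psum (c (j : ℕ)) ((i : ℕ) + 1) : ℝ) - (psum (c ((j : ℕ) + 1)) ((i : ℕ) + 1) : ℝ)
      else 0) = z
    split_ifs
    · exact ⟨(psum (c (j : ℕ)) ((i : ℕ) + 1) : ℤ) - (psum (c ((j : ℕ) + 1)) ((i : ℕ) + 1) : ℤ),
        by push_cast; ring⟩
    · exact ⟨0, by simp⟩
  · show ∃ z : ℤ, (if i = i' ∧ (j' : ℕ) = (j : ℕ) + 1 then (c ((j : ℕ) + 1) i : ℝ)
      else if (i' : ℕ) = (i : ℕ) + 1 ∧ j = j' then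
        (psum (c (j : ℕ)) ((i : ℕ) + 1) : ℝ) - (psum (c ((j : ℕ) + 1)) ((i : ℕ) + 1) : ℝ)
      else 0) = z
    split_ifs
    · exact ⟨(c ((j : ℕ) + 1) i : ℤ), by push_cast; ring⟩
    · exact ⟨(psum (c (j : ℕ)) ((i : ℕ) + 1) : ℤ) - (psum (c ((j : ℕ) + 1)) ((i : ℕ) + 1) : ℤ),
        by push_cast; ring⟩
    · exact ⟨0, by simp⟩

theorem toFlow_inj {a b : Fin n → ℕ} {c c' : ℕ → Fin n → ℕ}
    (hc : IsChain m a b c) (hc' : IsChain m a b c')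
    (h : toFlow n m c = toFlow n m c') : c = c' := by
  funext t
  match t with
  | 0 => rw [hc.1, hc'.1]
  | t + 1 =>
    by_cases ht : t < m
    · funext i
      have hkey := congrFun (congrFun h (some (i, ⟨t, by omega⟩)))
        (some (i, ⟨t + 1, by omega⟩))
      have e1 : ∀ d : ℕ → Fin n → ℕ, toFlow n m d (some (i, (⟨t, by omega⟩ : Fin (m + 1))))
          (some (i, (⟨t + 1, by omega⟩ : Fin (m + 1)))) = (d (t + 1) i : ℝ) := by
        intro d
        show (if i = i ∧ ((⟨t + 1, by omega⟩ : Fin (m + 1)) : ℕ) =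
            ((⟨t, by omega⟩ : Fin (m + 1)) : ℕ) + 1 then
            (d (((⟨t, by omega⟩ : Fin (m + 1)) : ℕ) + 1) i : ℝ) else _) = _
        rw [if_pos ⟨rfl, rfl⟩]
      rw [e1, e1] at hkey
      exact_mod_cast hkey
    · rw [hc.2.1 (t + 1) (by omega), hc'.2.1 (t + 1) (by omega)]

/-! #### From chains to plane partitions -/

/-- The plane partition associated to a chain: the entry at cell `(i,j)` is the
number of `t ∈ [1,m]` such that `(i,j)` lies in the shape `λ(c t)/μ`. -/
noncomputable def toPP (n m : ℕ) (a b : Fin n → ℕ) (c : ℕ → Fin n → ℕ) : ℕ → ℕ → ℕ :=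
  fun i j =>
    if IsCellOf n (lamOf n a) (lamOf n b) i j then
      ((Finset.Icc 1 m).filter fun t => j ≤ lamOf n (c t) i).card
    else 0

theorem toPP_isSkewPP (hn : 0 < n) {a b : Fin n → ℕ} {c : ℕ → Fin n → ℕ}
    (hc : IsChain m a b c) :
    IsSkewPP n m (lamOf n a) (lamOf n b) (toPP n m a b c) := by
  refine ⟨fun i j h => by simp only [toPP, if_neg h], ?_, ?_, ?_⟩
  · intro i j hcell
    simp only [toPP, if_pos hcell]
    calc ((Finset.Icc 1 m).filter fun t => j ≤ lamOf n (c t) i).card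
        ≤ (Finset.Icc 1 m).card := Finset.card_filter_le _ _
      _ = m := by rw [Nat.card_Icc]; omega
  · intro i j hc1 hc2
    simp only [toPP, if_pos hc1, if_pos hc2]
    apply Finset.card_le_card
    intro t ht
    rw [Finset.mem_filter] at ht ⊢
    exact ⟨ht.1, by omega⟩
  · intro i j hc1 hc2
    simp only [toPP, if_pos hc1, if_pos hc2]
    apply Finset.card_le_card
    intro t ht
    rw [Finset.mem_filter] at ht ⊢
    exact ⟨ht.1, le_trans ht.2 (lamOf_antitone (c t) (by omega))⟩

theorem toPP_ge_iff {a b : Fin n → ℕ} {c : ℕ → Fin n → ℕ} (hc : IsChain m a b c)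
    {i j : ℕ} (hcell : IsCellOf n (lamOf n a) (lamOf n b) i j) {t : ℕ}
    (ht1 : 1 ≤ t) (htm : t ≤ m) :
    t ≤ toPP n m a b c i j ↔ j ≤ lamOf n (c t) i := by
  simp only [toPP, if_pos hcell]
  constructor
  · intro ht
    by_contra hlt
    push_neg at hlt
    have hsub : ((Finset.Icc 1 m).filter fun t' => j ≤ lamOf n (c t') i) ⊆
        Finset.Icc 1 (t - 1) := by
      intro t' ht'
      rw [Finset.mem_filter, Finset.mem_Icc] at ht'
      rw [Finset.mem_Icc]
      rcases Nat.lt_or_ge t' t with h | h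
      · exact ⟨ht'.1.1, by omega⟩
      · exfalso
        have h1 : lamOf n (c t') i ≤ lamOf n (c t) i := lamOf_le_of_dom (hc.dom h) i
        omega
    have hcard := Finset.card_le_card hsub
    rw [Nat.card_Icc] at hcard
    omega
  · intro hle
    have hsub : Finset.Icc 1 t ⊆
        ((Finset.Icc 1 m).filter fun t' => j ≤ lamOf n (c t') i) := by
      intro t' ht'
      rw [Finset.mem_Icc] at ht'
      rw [Finset.mem_filter, Finset.mem_Icc]
      exact ⟨⟨ht'.1, le_trans ht'.2 htm⟩,
        le_trans hle (lamOf_le_of_dom (hc.dom ht'.2) i)⟩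
    have hcard := Finset.card_le_card hsub
    rw [Nat.card_Icc] at hcard
    omega

/-! #### From plane partitions to chains -/

/-- The `t`-th shape `ν^t` extracted from a plane partition `π`. -/
noncomputable def nuOf (n m : ℕ) (a b : Fin n → ℕ) (π : ℕ → ℕ → ℕ) (t i : ℕ) : ℕ :=
  if t = 0 then lamOf n a i
  else if m + 1 ≤ t then lamOf n b i
  else max (lamOf n b i) (((Finset.Icc 1 (lamOf n a i)).filter fun j => t ≤ π i j).sup id)

/-- The chain extracted from a plane partition. -/
noncomputable def ofPP (n m : ℕ) (a b : Fin n → ℕ) (π : ℕ → ℕ → ℕ) : ℕ → Fin n → ℕ :=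
  fun t i' => nuOf n m a b π t (n - (i' : ℕ)) - nuOf n m a b π t (n - (i' : ℕ) + 1)

/-- Entries of a skew plane partition weakly decrease along a row. -/
theorem row_le {lam mu : ℕ → ℕ} {π : ℕ → ℕ → ℕ} (hπ : IsSkewPP n m lam mu π)
    {i j j' : ℕ} (h1 : IsCellOf n lam mu i j) (hle : j ≤ j') (h2 : j' ≤ lam i) :
    π i j' ≤ π i j := by
  obtain ⟨hi1, hi2, hmuj, hjlam⟩ := h1
  have H : ∀ j'', j ≤ j'' → j'' ≤ lam i → π i j'' ≤ π i j := by
    intro j'' hle'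
    induction j'', hle' using Nat.le_induction with
    | base => intro _; exact le_rfl
    | succ j'' hj'' ih =>
      intro hb
      have hcell' : IsCellOf n lam mu i j'' := ⟨hi1, hi2, by omega, by omega⟩
      have hcell'' : IsCellOf n lam mu i (j'' + 1) := ⟨hi1, hi2, by omega, hb⟩
      exact le_trans (hπ.2.2.1 i j'' hcell' hcell'') (ih (by omega))
  exact H j' hle h2

theorem cell_of_pos {lam mu : ℕ → ℕ} {π : ℕ → ℕ → ℕ} (hπ : IsSkewPP n m lam mu π)
    {i j : ℕ} (h : 0 < π i j) : IsCellOf n lam mu i j := by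
  by_contra hc
  rw [hπ.1 i j hc] at h
  omega

theorem nuOf_top {a b : Fin n → ℕ} (π : ℕ → ℕ → ℕ) (t : ℕ) :
    nuOf n m a b π t (n + 1) = 0 := by
  unfold nuOf
  split_ifs
  · exact lamOf_top a
  · exact lamOf_top b
  · rw [lamOf_top a, lamOf_top b]
    rw [show Finset.Icc 1 0 = (∅ : Finset ℕ) from Finset.Icc_eq_empty (by omega)]
    simp

theorem nuOf_anti_i {a b : Fin n → ℕ} {π : ℕ → ℕ → ℕ}
    (hπ : IsSkewPP n m (lamOf n a) (lamOf n b) π) (t : ℕ) {i : ℕ} (hi : 1 ≤ i) :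
    nuOf n m a b π t (i + 1) ≤ nuOf n m a b π t i := by
  unfold nuOf
  split_ifs
  · exact lamOf_antitone a (by omega)
  · exact lamOf_antitone b (by omega)
  · refine max_le (le_max_of_le_left (lamOf_antitone b (by omega))) ?_
    refine Finset.sup_le ?_
    intro j hj
    rw [Finset.mem_filter, Finset.mem_Icc] at hj
    obtain ⟨⟨hj1, hj2⟩, hjt⟩ := hj
    have ht0 : 0 < t := by omega
    have hcell : IsCellOf n (lamOf n a) (lamOf n b) (i + 1) j :=
      cell_of_pos hπ (by omega)
    have hile : i + 1 ≤ n := hcell.2.1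
    by_cases hmu : j ≤ lamOf n b i
    · exact le_max_of_le_left hmu
    · push_neg at hmu
      have hcelli : IsCellOf n (lamOf n a) (lamOf n b) i j :=
        ⟨hi, by omega, hmu, le_trans hj2 (lamOf_antitone a (by omega))⟩
      have hle : t ≤ π i j := le_trans hjt (hπ.2.2.2 i j hcelli hcell)
      refine le_max_of_le_right ?_
      refine Finset.le_sup (f := id) ?_
      rw [Finset.mem_filter, Finset.mem_Icc]
      exact ⟨⟨hj1, le_trans hj2 (lamOf_antitone a (by omega))⟩, hle⟩

theorem nuOf_lower {a b : Fin n → ℕ} (hab : Dominates a b) (π : ℕ → ℕ → ℕ)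
    (t i : ℕ) : lamOf n b i ≤ nuOf n m a b π t i := by
  unfold nuOf
  split_ifs
  · exact hab _
  · exact le_rfl
  · exact le_max_left _ _

theorem nuOf_anti_t {a b : Fin n → ℕ} (hab : Dominates a b) (π : ℕ → ℕ → ℕ)
    (t i : ℕ) : nuOf n m a b π (t + 1) i ≤ nuOf n m a b π t i := by
  have hLHS0 : ¬ (t + 1 = 0) := by omega
  by_cases hm : m + 1 ≤ t + 1
  · have hL : nuOf n m a b π (t + 1) i = lamOf n b i := by
      unfold nuOf; rw [if_neg hLHS0, if_pos hm]
    rw [hL]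
    exact nuOf_lower hab π t i
  · have hL : nuOf n m a b π (t + 1) i =
        max (lamOf n b i)
          (((Finset.Icc 1 (lamOf n a i)).filter fun j => t + 1 ≤ π i j).sup id) := by
      unfold nuOf; rw [if_neg hLHS0, if_neg hm]
    rw [hL]
    by_cases ht0 : t = 0
    · subst ht0
      have hR : nuOf n m a b π 0 i = lamOf n a i := by
        unfold nuOf; rw [if_pos rfl]
      rw [hR]
      refine max_le (hab _) (Finset.sup_le fun j hj => ?_)
      rw [Finset.mem_filter, Finset.mem_Icc] at hj
      exact hj.1.2
    · have hR : nuOf n m a b π t i =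
          max (lamOf n b i)
            (((Finset.Icc 1 (lamOf n a i)).filter fun j => t ≤ π i j).sup id) := by
        unfold nuOf; rw [if_neg ht0, if_neg (by omega)]
      rw [hR]
      refine max_le (le_max_left _ _) (le_max_of_le_right (Finset.sup_le fun j hj => ?_))
      rw [Finset.mem_filter, Finset.mem_Icc] at hj
      refine Finset.le_sup (f := id) ?_
      rw [Finset.mem_filter, Finset.mem_Icc]
      exact ⟨hj.1, by omega⟩

/-- Telescoping sums of successive differences of an eventually-antitone `g`. -/
theorem psum_tele (g : ℕ → ℕ) (hg : ∀ i, 1 ≤ i → g (i + 1) ≤ g i) (hg0 : g (n + 1) = 0) :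
    ∀ k, k ≤ n →
      psum (fun i' : Fin n => g (n - (i' : ℕ)) - g (n - (i' : ℕ) + 1)) k = g (n + 1 - k) := by
  intro k
  induction k with
  | zero =>
    intro _
    rw [psum_zero]
    simpa using hg0.symm
  | succ k ih =>
    intro hk
    rw [psum_succ _ k (by omega), ih (by omega)]
    have h1 : n + 1 - k = n - k + 1 := by omega
    have h2 : g (n - k + 1) ≤ g (n - k) := hg (n - k) (by omega)
    have h3 : n + 1 - (k + 1) = n - k := by omega
    have h4 : ((⟨k, by omega⟩ : Fin n) : ℕ) = k := rfl
    rw [h1, h3]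
    simp only [h4]
    omega

theorem ofPP_isChain (hn : 0 < n) {a b : Fin n → ℕ} (hab : Dominates a b)
    {π : ℕ → ℕ → ℕ} (hπ : IsSkewPP n m (lamOf n a) (lamOf n b) π) :
    IsChain m a b (ofPP n m a b π) := by
  have htele : ∀ t k, k ≤ n →
      psum (ofPP n m a b π t) k = nuOf n m a b π t (n + 1 - k) := by
    intro t k hk
    exact psum_tele (nuOf n m a b π t) (fun i hi => nuOf_anti_i hπ t hi) (nuOf_top π t) k hk
  refine ⟨?_, ?_, ?_⟩
  · funext i'
    show nuOf n m a b π 0 (n - (i' : ℕ)) - nuOf n m a b π 0 (n - (i' : ℕ) + 1) = a i'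
    have hv := i'.isLt
    unfold nuOf
    rw [if_pos rfl, if_pos rfl]
    show lamOf n a (n - (i' : ℕ)) - lamOf n a (n - (i' : ℕ) + 1) = a i'
    unfold lamOf
    rw [show n + 1 - (n - (i' : ℕ)) = (i' : ℕ) + 1 by omega,
      show n + 1 - (n - (i' : ℕ) + 1) = (i' : ℕ) by omega,
      psum_succ a (i' : ℕ) i'.isLt, Nat.add_sub_cancel_left]
  · intro t ht
    funext i'
    show nuOf n m a b π t (n - (i' : ℕ)) - nuOf n m a b π t (n - (i' : ℕ) + 1) = b i'
    have hv := i'.isLt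
    unfold nuOf
    rw [if_neg (by omega), if_pos (by omega), if_neg (by omega), if_pos (by omega)]
    show lamOf n b (n - (i' : ℕ)) - lamOf n b (n - (i' : ℕ) + 1) = b i'
    unfold lamOf
    rw [show n + 1 - (n - (i' : ℕ)) = (i' : ℕ) + 1 by omega,
      show n + 1 - (n - (i' : ℕ) + 1) = (i' : ℕ) by omega,
      psum_succ b (i' : ℕ) i'.isLt, Nat.add_sub_cancel_left]
  · intro t k
    by_cases hk : k ≤ n
    · rw [htele t k hk, htele (t + 1) k hk]
      exact nuOf_anti_t hab π t _
    · push_neg at hk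
      rw [psum_stable _ k (by omega), psum_stable _ k (by omega),
        htele t n le_rfl, htele (t + 1) n le_rfl]
      exact nuOf_anti_t hab π t _

theorem toPP_ofPP (hn : 0 < n) {a b : Fin n → ℕ} (hab : Dominates a b)
    {π : ℕ → ℕ → ℕ} (hπ : IsSkewPP n m (lamOf n a) (lamOf n b) π) :
    toPP n m a b (ofPP n m a b π) = π := by
  have htele : ∀ t k, k ≤ n →
      psum (ofPP n m a b π t) k = nuOf n m a b π t (n + 1 - k) := by
    intro t k hk
    exact psum_tele (nuOf n m a b π t) (fun i hi => nuOf_anti_i hπ t hi) (nuOf_top π t) k hk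
  have hlam : ∀ t i, 1 ≤ i → i ≤ n + 1 →
      lamOf n (ofPP n m a b π t) i = nuOf n m a b π t i := by
    intro t i h1 h2
    show psum (ofPP n m a b π t) (n + 1 - i) = _
    rw [htele t (n + 1 - i) (by omega), show n + 1 - (n + 1 - i) = i by omega]
  funext i j
  by_cases hcell : IsCellOf n (lamOf n a) (lamOf n b) i j
  · simp only [toPP, if_pos hcell]
    obtain ⟨hi1, hi2, hmuj, hjlam⟩ := hcell
    have hπm : π i j ≤ m := hπ.2.1 i j ⟨hi1, hi2, hmuj, hjlam⟩
    have hkey : ∀ t ∈ Finset.Icc 1 m,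
        (j ≤ lamOf n (ofPP n m a b π t) i ↔ t ≤ π i j) := by
      intro t htm
      rw [Finset.mem_Icc] at htm
      rw [hlam t i hi1 (by omega)]
      have hnum : nuOf n m a b π t i =
          max (lamOf n b i)
            (((Finset.Icc 1 (lamOf n a i)).filter fun j' => t ≤ π i j').sup id) := by
        unfold nuOf
        rw [if_neg (by omega), if_neg (by omega)]
      rw [hnum]
      constructor
      · intro hj
        have hj' : j ≤ ((Finset.Icc 1 (lamOf n a i)).filter fun j' => t ≤ π i j').sup id := by
          rcases le_max_iff.mp hj with h | h
          · omega
          · exact h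
        have hne : ((Finset.Icc 1 (lamOf n a i)).filter fun j' => t ≤ π i j').Nonempty := by
          rcases Finset.eq_empty_or_nonempty
            ((Finset.Icc 1 (lamOf n a i)).filter fun j' => t ≤ π i j') with he | hne
          · rw [he] at hj'
            simp at hj'
            omega
          · exact hne
        obtain ⟨j', hj'mem, hj'eq⟩ := Finset.exists_mem_eq_sup _ hne id
        rw [Finset.mem_filter, Finset.mem_Icc] at hj'mem
        have hjj' : j ≤ j' := by rw [hj'eq] at hj'; exact hj'
        have hrow := row_le hπ ⟨hi1, hi2, hmuj, hjlam⟩ hjj' hj'mem.1.2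
        omega
      · intro ht
        refine le_max_of_le_right (Finset.le_sup (f := id) ?_)
        rw [Finset.mem_filter, Finset.mem_Icc]
        exact ⟨⟨by omega, hjlam⟩, ht⟩
    rw [Finset.filter_congr hkey]
    have hIcc : (Finset.Icc 1 m).filter (fun t => t ≤ π i j) = Finset.Icc 1 (π i j) := by
      ext t
      simp only [Finset.mem_filter, Finset.mem_Icc]
      omega
    rw [hIcc, Nat.card_Icc]
    omega
  · simp only [toPP, if_neg hcell]
    exact (hπ.1 i j hcell).symm

theorem ofPP_toPP (hn : 0 < n) {a b : Fin n → ℕ} (hab : Dominates a b)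
    {c : ℕ → Fin n → ℕ} (hc : IsChain m a b c) :
    ofPP n m a b (toPP n m a b c) = c := by
  have hnu : ∀ t k, 1 ≤ k → k ≤ n + 1 →
      nuOf n m a b (toPP n m a b c) t k = lamOf n (c t) k := by
    intro t k h1 h2
    by_cases ht0 : t = 0
    · subst ht0
      unfold nuOf
      rw [if_pos rfl, hc.1]
    · by_cases htm : m + 1 ≤ t
      · unfold nuOf
        rw [if_neg ht0, if_pos htm, hc.2.1 t htm]
      · unfold nuOf
        rw [if_neg ht0, if_neg htm]
        have hμL : lamOf n b k ≤ lamOf n (c t) k := by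
          have h := lamOf_le_of_dom (hc.dom (show t ≤ m + 1 by omega)) k
          rw [hc.2.1 (m + 1) le_rfl] at h
          exact h
        have hLlam : lamOf n (c t) k ≤ lamOf n a k := by
          have h := lamOf_le_of_dom (hc.dom (Nat.zero_le t)) k
          rw [hc.1] at h
          exact h
        by_cases hk1 : k = n + 1
        · subst hk1
          rw [lamOf_top b, lamOf_top a, lamOf_top (c t),
            show Finset.Icc 1 0 = (∅ : Finset ℕ) from Finset.Icc_eq_empty (by omega)]
          simp
        · have hkn : k ≤ n := by omega
          have hmem : ∀ j,
              (j ∈ (Finset.Icc 1 (lamOf n a k)).filter fun j' => t ≤ toPP n m a b c k j') ↔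
                (lamOf n b k < j ∧ j ≤ lamOf n (c t) k) := by
            intro j
            rw [Finset.mem_filter, Finset.mem_Icc]
            constructor
            · rintro ⟨⟨hj1, hj2⟩, hjt⟩
              have hcell : IsCellOf n (lamOf n a) (lamOf n b) k j :=
                cell_of_pos (toPP_isSkewPP hn hc) (by omega)
              exact ⟨hcell.2.2.1,
                (toPP_ge_iff hc hcell (by omega) (by omega)).mp hjt⟩
            · rintro ⟨hj1, hj2⟩
              have hcell : IsCellOf n (lamOf n a) (lamOf n b) k j :=
                ⟨h1, hkn, hj1, by omega⟩
              exact ⟨⟨by omega, by omega⟩,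
                (toPP_ge_iff hc hcell (by omega) (by omega)).mpr hj2⟩
          by_cases hL : lamOf n b k < lamOf n (c t) k
          · have hsup : ((Finset.Icc 1 (lamOf n a k)).filter
                fun j' => t ≤ toPP n m a b c k j').sup id = lamOf n (c t) k := by
              apply le_antisymm
              · exact Finset.sup_le fun j hj => ((hmem j).mp hj).2
              · exact Finset.le_sup (f := id) ((hmem (lamOf n (c t) k)).mpr ⟨hL, le_rfl⟩)
            rw [hsup]
            exact max_eq_right (by omega)
          · have hS : ((Finset.Icc 1 (lamOf n a k)).filter
                fun j' => t ≤ toPP n m a b c k j') = ∅ :=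
              Finset.eq_empty_of_forall_notMem fun j hj => by
                have := (hmem j).mp hj
                omega
            rw [hS]
            simp only [Finset.sup_empty]
            have hbot : (⊥ : ℕ) = 0 := rfl
            rw [hbot]
            omega
  funext t i'
  show nuOf n m a b (toPP n m a b c) t (n - (i' : ℕ)) -
      nuOf n m a b (toPP n m a b c) t (n - (i' : ℕ) + 1) = c t i'
  have hv := i'.isLt
  rw [hnu t (n - (i' : ℕ)) (by omega) (by omega),
    hnu t (n - (i' : ℕ) + 1) (by omega) (by omega)]
  show psum (c t) (n + 1 - (n - (i' : ℕ))) - psum (c t) (n + 1 - (n - (i' : ℕ) + 1)) = c t i'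
  rw [show n + 1 - (n - (i' : ℕ)) = (i' : ℕ) + 1 by omega,
    show n + 1 - (n - (i' : ℕ) + 1) = (i' : ℕ) by omega,
    psum_succ (c t) _ i'.isLt, Nat.add_sub_cancel_left]

/-! #### From flows to chains -/

/-- The chain extracted from a flow: read off the horizontal flow values. -/
noncomputable def ofFlow (n m : ℕ) (a b : Fin n → ℕ) (f : Vtx n m → Vtx n m → ℝ) :
    ℕ → Fin n → ℕ
  | 0 => a
  | t + 1 =>
      if h : t < m then
        fun i => ⌊f (some (i, ⟨t, by omega⟩)) (some (i, ⟨t + 1, by omega⟩))⌋₊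
      else b

theorem int_flow_floor {f : Vtx n m → Vtx n m → ℝ} (hpos : ∀ u v, 0 ≤ f u v)
    (hint : IsIntegerFlow f) (u v : Vtx n m) : ((⌊f u v⌋₊ : ℝ)) = f u v := by
  obtain ⟨z, hz⟩ := hint u v
  have hz0 : (0 : ℤ) ≤ z := by
    have h := hpos u v
    rw [hz] at h
    exact_mod_cast h
  have hzn : (z : ℝ) = ((z.toNat : ℕ) : ℝ) := by
    exact_mod_cast (congrArg (Int.cast : ℤ → ℝ) (Int.toNat_of_nonneg hz0)).symm
  rw [hz, hzn, Nat.floor_natCast]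

theorem ofFlow_horiz {a b : Fin n → ℕ} {f : Vtx n m → Vtx n m → ℝ}
    (hpos : ∀ u v, 0 ≤ f u v) (hint : IsIntegerFlow f) (i : Fin n) (j : Fin (m + 1))
    (hj : (j : ℕ) < m) :
    f (some (i, j)) (some (i, ⟨(j : ℕ) + 1, by omega⟩)) =
      (ofFlow n m a b f ((j : ℕ) + 1) i : ℝ) := by
  show _ = (ofFlow n m a b f ((j : ℕ) + 1) i : ℝ)
  simp only [ofFlow]
  rw [dif_pos hj]
  rw [show (⟨(j : ℕ), by omega⟩ : Fin (m + 1)) = j from Fin.eta j j.isLt]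
  exact (int_flow_floor hpos hint _ _).symm

theorem ofFlow_high {a b : Fin n → ℕ} (f : Vtx n m → Vtx n m → ℝ) {t : ℕ}
    (ht : m + 1 ≤ t) : ofFlow n m a b f t = b := by
  obtain ⟨t', rfl⟩ : ∃ t', t = t' + 1 := ⟨t - 1, by omega⟩
  simp only [ofFlow]
  rw [dif_neg (by omega)]

theorem fR_ofFlow {a b : Fin n → ℕ} {f : Vtx n m → Vtx n m → ℝ}
    (hpos : ∀ u v, 0 ≤ f u v) (hint : IsIntegerFlow f) (i : Fin n) (j : Fin (m + 1)) :
    fR f i j = (ofFlow n m a b f ((j : ℕ) + 1) i : ℝ) -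
      (if (j : ℕ) = m then (b i : ℝ) else 0) := by
  by_cases hj : (j : ℕ) < m
  · rw [fR, dif_pos hj, ofFlow_horiz hpos hint i j hj, if_neg (by omega), sub_zero]
  · have hjm : (j : ℕ) = m := by have := j.isLt; omega
    rw [fR, dif_neg hj, if_pos hjm, ofFlow_high (a := a) f (by omega)]
    ring

theorem fL_ofFlow {a b : Fin n → ℕ} {f : Vtx n m → Vtx n m → ℝ}
    (hpos : ∀ u v, 0 ≤ f u v) (hint : IsIntegerFlow f) (i : Fin n) (j : Fin (m + 1)) :
    fL f i j = (ofFlow n m a b f (j : ℕ) i : ℝ) -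
      (if (j : ℕ) = 0 then (a i : ℝ) else 0) := by
  by_cases hj : 0 < (j : ℕ)
  · rw [fL, dif_pos hj, if_neg (by omega), sub_zero]
    set j0 : Fin (m + 1) := ⟨(j : ℕ) - 1, by omega⟩ with hj0
    have h1 : (j0 : ℕ) < m := by
      show (j : ℕ) - 1 < m
      have := j.isLt
      omega
    have h2 := ofFlow_horiz (a := a) (b := b) hpos hint i j0 h1
    have h4 : (j0 : ℕ) + 1 = (j : ℕ) := by
      show (j : ℕ) - 1 + 1 = (j : ℕ)
      omega
    have h5 : (⟨(j0 : ℕ) + 1, by omega⟩ : Fin (m + 1)) = j := Fin.ext h4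
    rw [h5, h4] at h2
    exact h2
  · have hj0 : (j : ℕ) = 0 := by omega
    rw [fL, dif_neg hj, if_pos hj0, hj0]
    show (0 : ℝ) = ((a i : ℕ) : ℝ) - (a i : ℝ)
    ring

/-- The cumulative vertical flow below row `k` at level `j`. -/
noncomputable def VF (f : Vtx n m → Vtx n m → ℝ) (k : ℕ) (j : Fin (m + 1)) : ℝ :=
  if h : 0 < k ∧ k ≤ n then fD f ⟨k - 1, by omega⟩ j else 0

theorem VF_nonneg {f : Vtx n m → Vtx n m → ℝ} (hpos : ∀ u v, 0 ≤ f u v)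
    (k : ℕ) (j : Fin (m + 1)) : 0 ≤ VF f k j := by
  rw [VF]
  split_ifs with h
  · rw [fD]
    split_ifs with h'
    · exact hpos _ _
    · exact hpos _ _
  · exact le_rfl

theorem VF_formula (hn : 0 < n) {a b : Fin n → ℕ} {f : Vtx n m → Vtx n m → ℝ}
    (hf : f ∈ FlowPolytope n m a b) (hint : IsIntegerFlow f) :
    ∀ k, k ≤ n → ∀ j : Fin (m + 1),
      VF f k j = (psum (ofFlow n m a b f (j : ℕ)) k : ℝ) -
        (psum (ofFlow n m a b f ((j : ℕ) + 1)) k : ℝ) := by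
  intro k
  induction k with
  | zero =>
    intro _ j
    rw [VF, dif_neg (by omega), psum_zero, psum_zero]
    norm_num
  | succ k ih =>
    intro hk j
    have hkn : k < n := by omega
    set iF : Fin n := ⟨k, hkn⟩ with hiF
    have hlb := local_balance hf iF j
    have hnet : netflow n m a b (some (iF, j)) =
        (if (j : ℕ) = 0 then (a iF : ℝ) else 0) -
          (if (j : ℕ) = m then (b iF : ℝ) else 0) := rfl
    have hpos := hf.2.1
    have hfU : fU f iF j = VF f k j := by
      by_cases h0 : 0 < k
      · rw [fU, dif_pos (show 0 < (iF : ℕ) from h0), VF, dif_pos ⟨h0, by omega⟩, fD,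
          dif_pos (show ((⟨k - 1, by omega⟩ : Fin n) : ℕ) + 1 < n by
            show k - 1 + 1 < n; omega)]
        refine congrArg₂ f rfl ?_
        simp only [Option.some.injEq, Prod.mk.injEq, Fin.ext_iff, Fin.val_mk]
        refine ⟨?_, trivial⟩
        show k = k - 1 + 1
        omega
      · rw [fU, dif_neg (show ¬ 0 < (iF : ℕ) from h0), VF, dif_neg (by omega)]
    have hfD : fD f iF j = VF f (k + 1) j := by
      rw [VF, dif_pos ⟨by omega, hk⟩]
      have h7 : (⟨k + 1 - 1, by omega⟩ : Fin n) = iF := Fin.ext rfl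
      rw [h7]
    rw [hnet, hfU, hfD, fR_ofFlow (a := a) (b := b) hpos hint iF j,
      fL_ofFlow (a := a) (b := b) hpos hint iF j, ih (by omega) j] at hlb
    have hps1 : (psum (ofFlow n m a b f (j : ℕ)) (k + 1) : ℝ) =
        (psum (ofFlow n m a b f (j : ℕ)) k : ℝ) + (ofFlow n m a b f (j : ℕ) iF : ℝ) := by
      rw [psum_succ _ k hkn]
      push_cast
      rfl
    have hps2 : (psum (ofFlow n m a b f ((j : ℕ) + 1)) (k + 1) : ℝ) =
        (psum (ofFlow n m a b f ((j : ℕ) + 1)) k : ℝ) +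
          (ofFlow n m a b f ((j : ℕ) + 1) iF : ℝ) := by
      rw [psum_succ _ k hkn]
      push_cast
      rfl
    rw [hps1, hps2]
    linarith

theorem ofFlow_isChain (hn : 0 < n) {a b : Fin n → ℕ} {f : Vtx n m → Vtx n m → ℝ}
    (hf : f ∈ FlowPolytope n m a b) (hint : IsIntegerFlow f) :
    IsChain m a b (ofFlow n m a b f) := by
  refine ⟨rfl, fun t ht => ofFlow_high f ht, ?_⟩
  intro t
  by_cases htm : t ≤ m
  · intro k
    by_cases hkn : k ≤ n
    · have hV := VF_formula hn hf hint k hkn ⟨t, by omega⟩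
      have hV0 := VF_nonneg hf.2.1 k (⟨t, by omega⟩ : Fin (m + 1))
      rw [hV] at hV0
      have : (psum (ofFlow n m a b f (t + 1)) k : ℝ) ≤
          (psum (ofFlow n m a b f t) k : ℝ) := by
        have hval : ((⟨t, by omega⟩ : Fin (m + 1)) : ℕ) = t := rfl
        rw [hval] at hV0
        linarith
      exact_mod_cast this
    · rw [psum_stable _ k (by omega), psum_stable _ k (by omega)]
      have hV := VF_formula hn hf hint n le_rfl ⟨t, by omega⟩
      have hV0 := VF_nonneg hf.2.1 n (⟨t, by omega⟩ : Fin (m + 1))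
      rw [hV] at hV0
      have : (psum (ofFlow n m a b f (t + 1)) n : ℝ) ≤
          (psum (ofFlow n m a b f t) n : ℝ) := by
        have hval : ((⟨t, by omega⟩ : Fin (m + 1)) : ℕ) = t := rfl
        rw [hval] at hV0
        linarith
      exact_mod_cast this
  · rw [ofFlow_high f (by omega), ofFlow_high f (by omega)]
    exact fun k => le_rfl

theorem ofFlow_eq_imp (hn : 0 < n) {a b : Fin n → ℕ} {f g : Vtx n m → Vtx n m → ℝ}
    (hf : f ∈ FlowPolytope n m a b) (hintf : IsIntegerFlow f)
    (hg : g ∈ FlowPolytope n m a b) (hintg : IsIntegerFlow g)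
    (h : ofFlow n m a b f = ofFlow n m a b g) : f = g := by
  funext u v
  rcases u with _ | ⟨i, j⟩
  · rw [hf.1 none v (fun he => he), hg.1 none v (fun he => he)]
  rcases v with _ | ⟨i', j'⟩
  · by_cases he : (i : ℕ) = n - 1
    · have key : ∀ F : Vtx n m → Vtx n m → ℝ, F ∈ FlowPolytope n m a b →
          IsIntegerFlow F →
          F (some (i, j)) none = (psum (ofFlow n m a b F (j : ℕ)) n : ℝ) -
            (psum (ofFlow n m a b F ((j : ℕ) + 1)) n : ℝ) := by
        intro F hF hintF
        have h1 : F (some (i, j)) none = VF F n j := by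
          rw [VF, dif_pos ⟨hn, le_rfl⟩, fD,
            dif_neg (show ¬ ((⟨n - 1, by omega⟩ : Fin n) : ℕ) + 1 < n from by
              show ¬ n - 1 + 1 < n; omega)]
          refine congrArg₂ F ?_ rfl
          exact congrArg (fun x => some (x, j)) (Fin.ext (show (i : ℕ) = n - 1 from he))
        rw [h1, VF_formula hn hF hintF n le_rfl j]
      rw [key f hf hintf, key g hg hintg, h]
    · rw [hf.1 (some (i, j)) none (fun hx => he hx), hg.1 (some (i, j)) none (fun hx => he hx)]
  · by_cases hedge : IsEdge n m (some (i, j)) (some (i', j'))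
    · have hedge' : (i = i' ∧ (j' : ℕ) = (j : ℕ) + 1) ∨
          ((i' : ℕ) = (i : ℕ) + 1 ∧ j = j') := hedge
      rcases hedge' with ⟨h1, h2⟩ | ⟨h1, h2⟩
      · cases h1
        have hjm : (j : ℕ) < m := by have := j'.isLt; omega
        have hj' : j' = (⟨(j : ℕ) + 1, by omega⟩ : Fin (m + 1)) := Fin.ext h2
        rw [hj', ofFlow_horiz (a := a) (b := b) hf.2.1 hintf i j hjm,
          ofFlow_horiz (a := a) (b := b) hg.2.1 hintg i j hjm, h]
      · cases h2
        have hi1 : (i' : ℕ) = (i : ℕ) + 1 := h1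
        have hi2 := i'.isLt
        have key : ∀ F : Vtx n m → Vtx n m → ℝ, F ∈ FlowPolytope n m a b →
            IsIntegerFlow F →
            F (some (i, j)) (some (i', j)) =
              (psum (ofFlow n m a b F (j : ℕ)) ((i : ℕ) + 1) : ℝ) -
                (psum (ofFlow n m a b F ((j : ℕ) + 1)) ((i : ℕ) + 1) : ℝ) := by
          intro F hF hintF
          have h1' : F (some (i, j)) (some (i', j)) = VF F ((i : ℕ) + 1) j := by
            rw [VF, dif_pos ⟨by omega, by omega⟩, fD,
              dif_pos (show ((⟨(i : ℕ) + 1 - 1, by omega⟩ : Fin n) : ℕ) + 1 < n from by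
                show (i : ℕ) + 1 - 1 + 1 < n; omega)]
            refine congrArg₂ F ?_ ?_
            · exact congrArg (fun x => some (x, j))
                (Fin.ext (show (i : ℕ) = (i : ℕ) + 1 - 1 by omega))
            · exact congrArg (fun x => some (x, j))
                (Fin.ext (show (i' : ℕ) = (i : ℕ) + 1 - 1 + 1 by omega))
          rw [h1', VF_formula hn hF hintF ((i : ℕ) + 1) (by omega) j]
        rw [key f hf hintf, key g hg hintg, h]
    · rw [hf.1 _ _ hedge, hg.1 _ _ hedge]

end Aux

/-- Plane partitions of shape `θ(a,b)` with entries at most `m`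
are in bijection with integer flows of `F_{G(n,m)}(a,b)`; in particular the two
sets have the same cardinality. -/
theorem statement1 (n m : ℕ) (hn : 0 < n) (hm : 0 < m) (a b : Fin n → ℕ)
    (hab : Dominates a b) :
    Nonempty
      ({ π : ℕ → ℕ → ℕ // IsSkewPP n m (lamOf n a) (lamOf n b) π } ≃
        { f : Vtx n m → Vtx n m → ℝ // f ∈ FlowPolytope n m a b ∧ IsIntegerFlow f }) ∧
    Set.ncard { π : ℕ → ℕ → ℕ | IsSkewPP n m (lamOf n a) (lamOf n b) π } =
      Set.ncard { f : Vtx n m → Vtx n m → ℝ |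
        f ∈ FlowPolytope n m a b ∧ IsIntegerFlow f } := by
  set P := { π : ℕ → ℕ → ℕ // IsSkewPP n m (lamOf n a) (lamOf n b) π }
  set F := { f : Vtx n m → Vtx n m → ℝ // f ∈ FlowPolytope n m a b ∧ IsIntegerFlow f }
  let Φ : P → F := fun x =>
    ⟨toFlow n m (ofPP n m a b x.1),
      toFlow_mem hn hm (ofPP_isChain hn hab x.2), toFlow_int _⟩
  let Ψ : F → P := fun x =>
    ⟨toPP n m a b (ofFlow n m a b x.1),
      toPP_isSkewPP hn (ofFlow_isChain hn x.2.1 x.2.2)⟩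
  have hΦ : Function.Injective Φ := by
    intro x y hxy
    have h1 : toFlow n m (ofPP n m a b x.1) = toFlow n m (ofPP n m a b y.1) :=
      congrArg Subtype.val hxy
    have h2 : ofPP n m a b x.1 = ofPP n m a b y.1 :=
      toFlow_inj (ofPP_isChain hn hab x.2) (ofPP_isChain hn hab y.2) h1
    have h3 : x.1 = y.1 := by
      rw [← toPP_ofPP hn hab x.2, ← toPP_ofPP hn hab y.2, h2]
    exact Subtype.ext h3
  have hΨ : Function.Injective Ψ := by
    intro x y hxy
    have h1 : toPP n m a b (ofFlow n m a b x.1) = toPP n m a b (ofFlow n m a b y.1) :=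
      congrArg Subtype.val hxy
    have h2 : ofFlow n m a b x.1 = ofFlow n m a b y.1 := by
      rw [← ofPP_toPP hn hab (ofFlow_isChain hn x.2.1 x.2.2),
        ← ofPP_toPP hn hab (ofFlow_isChain hn y.2.1 y.2.2), h1]
    exact Subtype.ext (ofFlow_eq_imp hn x.2.1 x.2.2 y.2.1 y.2.2 h2)
  obtain ⟨h, hbij⟩ := Function.Embedding.schroeder_bernstein hΦ hΨ
  have e : P ≃ F := Equiv.ofBijective h hbij
  refine ⟨⟨e⟩, ?_⟩
  rw [← Nat.card_coe_set_eq, ← Nat.card_coe_set_eq]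
  exact Nat.card_congr e

end GPS
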